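/- Let E be a real inner product space and let p be real with 1 < p < 2. Then there exists a constant C_p > 0 such that for all a, b ∈ E with (a, b) ≠ (0, 0), ⟨‖a‖^{p-2} a - ‖b‖^{p-2} b, a - b⟩ ≥ C_p ‖a - b‖² / (‖a‖ + ‖b‖)^{2-p}, where ‖ξ‖^{p-2} ξ is interpreted as 0 when ξ = 0. -/

import Mathlib

/-!
Write `x = ‖a‖`, `y = ‖b‖`, `t = ⟪a, b⟫` and `r = p - 1 ∈ (0, 1)`, and clear the denominator
`(x + y)^{2-p}`. Both sides are then affine in `t`, which ranges over `[-xy, xy]` by Cauchy–Schwarz,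
so it suffices to check the two endpoints, where the inequality takes the form
`r (x ∓ y)² ≤ (x^r ∓ y^r)(x ∓ y)(x + y)^{1-r}`. The case `t = xy` follows from the concavity of
`s ↦ s^r` (its tangent line at `max x y`), the case `t = -xy` from its subadditivity.
-/

open Real

namespace Real

variable {r x y : ℝ}

theorem mul_rpow_sub_one_mul_sub_le_rpow_sub_rpow (hr₀ : 0 ≤ r) (hr₁ : r ≤ 1) (hy : 0 ≤ y)
    (hyx : y ≤ x) : r * x ^ (r - 1) * (x - y) ≤ x ^ r - y ^ r := by
  obtain rfl | hx := (hy.trans hyx).eq_or_lt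
  · obtain rfl : y = 0 := le_antisymm hyx hy
    simp
  have hbern := rpow_one_add_le_one_add_mul_self (s := y / x - 1)
    (by linarith [div_nonneg hy hx.le]) hr₀ hr₁
  rw [add_sub_cancel, div_rpow hy hx.le, div_le_iff₀ (by positivity)] at hbern
  calc r * x ^ (r - 1) * (x - y) = x ^ r - x ^ r * (1 + r * (y / x - 1)) := by
        rw [rpow_sub_one hx.ne']
        field_simp
        ring
    _ ≤ x ^ r - y ^ r := by linarith

theorem mul_sq_sub_le_rpow_sub_rpow_mul_sub_mul_add_rpow (hr₀ : 0 ≤ r) (hr₁ : r ≤ 1)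
    (hx : 0 ≤ x) (hy : 0 ≤ y) :
    r * (x - y) ^ 2 ≤ (x ^ r - y ^ r) * (x - y) * (x + y) ^ (1 - r) := by
  wlog hyx : y ≤ x generalizing x y
  · have h := this hy hx (le_of_not_ge hyx)
    rw [add_comm] at h
    linear_combination h
  obtain rfl | hx := hx.eq_or_lt
  · obtain rfl : y = 0 := le_antisymm hyx hy
    simp
  have hinv : x ^ (r - 1) * x ^ (1 - r) = 1 := by
    rw [← rpow_add hx]
    simp
  calc r * (x - y) ^ 2 = r * x ^ (r - 1) * (x - y) * (x - y) * x ^ (1 - r) := by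
        linear_combination (-(r * (x - y) ^ 2)) * hinv
    _ ≤ (x ^ r - y ^ r) * (x - y) * x ^ (1 - r) := by
        have htangent := mul_rpow_sub_one_mul_sub_le_rpow_sub_rpow hr₀ hr₁ hy hyx
        gcongr
    _ ≤ (x ^ r - y ^ r) * (x - y) * (x + y) ^ (1 - r) := by
        have hdiff : 0 ≤ x ^ r - y ^ r := sub_nonneg.mpr (rpow_le_rpow hy hyx hr₀)
        gcongr
        exact le_add_of_nonneg_right hy

theorem mul_sq_add_le_rpow_add_rpow_mul_add_mul_add_rpow (hr₀ : 0 ≤ r) (hr₁ : r ≤ 1)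
    (hx : 0 ≤ x) (hy : 0 ≤ y) :
    r * (x + y) ^ 2 ≤ (x ^ r + y ^ r) * (x + y) * (x + y) ^ (1 - r) := by
  calc r * (x + y) ^ 2 ≤ (x + y) ^ 2 := mul_le_of_le_one_left (sq_nonneg _) hr₁
    _ = (x + y) ^ r * (x + y) * (x + y) ^ (1 - r) := by
        rw [mul_right_comm, ← rpow_add' (by positivity) (by simp)]
        simp [sq]
    _ ≤ (x ^ r + y ^ r) * (x + y) * (x + y) ^ (1 - r) := by
        gcongr
        exact rpow_add_le_add_rpow hx hy hr₀ hr₁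

end Real

theorem add_mul_nonneg_of_abs_le {c d m t : ℝ} (ht : |t| ≤ m) (hneg : 0 ≤ c - d * m)
    (hpos : 0 ≤ c + d * m) : 0 ≤ c + d * t := by
  obtain ⟨h₁, h₂⟩ := abs_le.mp ht
  rcases le_total 0 d with hd | hd <;> nlinarith

theorem real_inner_smul_sub_smul_sub {E : Type*} [NormedAddCommGroup E] [InnerProductSpace ℝ E]
    (a b : E) (u v : ℝ) :
    inner ℝ (u • a - v • b) (a - b) = u * ‖a‖ ^ 2 + v * ‖b‖ ^ 2 - (u + v) * inner ℝ a b := by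
  rw [inner_sub_left, inner_sub_right, inner_sub_right, real_inner_smul_left,
    real_inner_smul_left, real_inner_smul_left, real_inner_smul_left,
    real_inner_self_eq_norm_sq, real_inner_self_eq_norm_sq, real_inner_comm b a]
  ring

theorem pLaplace_scalar_bound {p x y t : ℝ} (hp₁ : 1 < p) (hp₂ : p ≤ 2) (hx : 0 ≤ x) (hy : 0 ≤ y)
    (ht : |t| ≤ x * y) :
    (p - 1) * (x ^ 2 - 2 * t + y ^ 2) ≤
      (x ^ (p - 2) * x ^ 2 + y ^ (p - 2) * y ^ 2 - (x ^ (p - 2) + y ^ (p - 2)) * t) *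
        (x + y) ^ (2 - p) := by
  have hr₀ : 0 ≤ p - 1 := by linarith
  have hr₁ : p - 1 ≤ 1 := by linarith
  have hexp : 1 - (p - 1) = 2 - p := by ring
  have hxp : x ^ (p - 2) * x = x ^ (p - 1) := by
    rw [← rpow_add_one' hx (by linarith)]
    ring_nf
  have hyp : y ^ (p - 2) * y = y ^ (p - 1) := by
    rw [← rpow_add_one' hy (by linarith)]
    ring_nf
  have hsub := mul_sq_sub_le_rpow_sub_rpow_mul_sub_mul_add_rpow hr₀ hr₁ hx hy
  have hadd := mul_sq_add_le_rpow_add_rpow_mul_add_mul_add_rpow hr₀ hr₁ hx hy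
  rw [hexp] at hsub hadd
  set D := (x + y) ^ (2 - p)
  have haffine := add_mul_nonneg_of_abs_le
    (c := (x ^ (p - 2) * x ^ 2 + y ^ (p - 2) * y ^ 2) * D - (p - 1) * (x ^ 2 + y ^ 2))
    (d := 2 * (p - 1) - (x ^ (p - 2) + y ^ (p - 2)) * D) ht ?_ ?_
  · linear_combination haffine
  · linear_combination hadd - (x + y) * D * hxp - (x + y) * D * hyp
  · linear_combination hsub - (x - y) * D * hxp + (x - y) * D * hyp

/-- Monotonicity of the `p`-Laplacian vector field `ξ ↦ ‖ξ‖^{p-2} ξ` in the singular case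
`1 < p < 2`: there is `C_p > 0` with
`⟨‖a‖^{p-2} a - ‖b‖^{p-2} b, a - b⟩ ≥ C_p ‖a - b‖² / (‖a‖ + ‖b‖)^{2-p}` for `(a,b) ≠ (0,0)`.
(Here `‖ξ‖^{p-2} ξ` is `0` when `ξ = 0`, which is automatic for the real power `0^{p-2} = 0`.) -/
theorem pLaplace_monotonicity_singular {E : Type*} [NormedAddCommGroup E]
    [InnerProductSpace ℝ E] (p : ℝ) (hp1 : 1 < p) (hp2 : p < 2) :
    ∃ Cp : ℝ, 0 < Cp ∧ ∀ a b : E, (a, b) ≠ (0, 0) →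
      Cp * ‖a - b‖ ^ 2 / (‖a‖ + ‖b‖) ^ (2 - p) ≤
        (inner ℝ (‖a‖ ^ (p - 2) • a - ‖b‖ ^ (p - 2) • b) (a - b) : ℝ) := by
  refine ⟨p - 1, by linarith, fun a b hab => ?_⟩
  have hsum : 0 < ‖a‖ + ‖b‖ := by
    obtain ha | hb : a ≠ 0 ∨ b ≠ 0 := by
      simpa only [ne_eq, Prod.mk.injEq, not_and_or] using hab
    · exact add_pos_of_pos_of_nonneg (norm_pos_iff.mpr ha) (norm_nonneg b)
    · exact add_pos_of_nonneg_of_pos (norm_nonneg a) (norm_pos_iff.mpr hb)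
  rw [div_le_iff₀ (rpow_pos_of_pos hsum _), norm_sub_sq_real, real_inner_smul_sub_smul_sub]
  exact pLaplace_scalar_bound hp1 hp2.le (norm_nonneg a) (norm_nonneg b)
    (abs_real_inner_le_norm a b)
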